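/- arXiv:math/0603329 — 3 statements merged into one kernel-verified Lean document; each statement's English description precedes it below -/
import Mathlib

section
/- Let H̄ be a K×K real matrix, B̄_{n,n} = I, B̄_{n,i} = ∏_{j=i+1}^{n}(I + j^{-1}H̄), and suppose Q_n = P_n + Σ_{k=0}^{n-1} Q_k H̄/(k+1) with Q_0 = P_0 = 0. Then Q_n = P_n + Σ_{m=1}^{n−1} P_m (H̄/(m+1)) B̄_{n,m+1} for all n ≥ 1 (summation-by-parts form of the recursion solution). -/
open Finset Matrix

/-- Lemma 5.1, second (summation-by-parts) identity:
`Q n = P n + ∑_{m=1}^{n-1} P m * (H̄/(m+1)) * B̄_{n,m+1}`. -/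
theorem stmt1 (K : ℕ) (Hb : Matrix (Fin K) (Fin K) ℝ)
    (B : ℕ → ℕ → Matrix (Fin K) (Fin K) ℝ)
    (hBnn : ∀ n, B n n = 1)
    (hBrec : ∀ n i, i < n → B n i = (1 + ((i + 1 : ℕ) : ℝ)⁻¹ • Hb) * B n (i + 1))
    (Q P : ℕ → Matrix (Fin 1) (Fin K) ℝ)
    (hQ0 : Q 0 = 0) (hP0 : P 0 = 0)
    (hrec : ∀ n, 1 ≤ n → Q n = P n + ∑ k ∈ Finset.range n, ((k + 1 : ℕ) : ℝ)⁻¹ • (Q k * Hb)) :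
    ∀ n, 1 ≤ n →
      Q n = P n + ∑ m ∈ Finset.Icc 1 (n - 1), P m * (((m + 1 : ℕ) : ℝ)⁻¹ • Hb) * B n (m + 1) := by
  -- shift lemma: B (n+1) i = B n i * (1 + (n+1)⁻¹ • Hb) for i ≤ n
  have hshift : ∀ n d i, d + i = n →
      B (n + 1) i = B n i * (1 + ((n + 1 : ℕ) : ℝ)⁻¹ • Hb) := by
    intro n d
    induction d with
    | zero =>
      intro i hi
      simp only [Nat.zero_add] at hi
      subst hi
      rw [hBrec (i+1) i (Nat.lt_succ_self i), hBnn, hBnn, mul_one, one_mul]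
    | succ d ih =>
      intro i hi
      have hi' : i < n := by omega
      have hi'' : i < n + 1 := by omega
      rw [hBrec (n+1) i hi'', hBrec n i hi', ih (i+1) (by omega), mul_assoc]
  intro n hn
  induction n, hn using Nat.le_induction with
  | base =>
    rw [hrec 1 le_rfl]
    simp [hQ0]
  | succ n hn ih =>
    obtain ⟨p, rfl⟩ : ∃ p, n = p + 1 := ⟨n - 1, by omega⟩
    have hsum : ∑ k ∈ Finset.range (p + 1), ((k + 1 : ℕ) : ℝ)⁻¹ • (Q k * Hb)
        = Q (p + 1) - P (p + 1) := by
      have := hrec (p + 1) (by omega)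
      rw [this]; abel
    have hQ2 : Q (p + 1 + 1) = P (p + 1 + 1) + (Q (p + 1) - P (p + 1))
        + ((p + 1 + 1 : ℕ) : ℝ)⁻¹ • (Q (p + 1) * Hb) := by
      rw [hrec (p + 1 + 1) (by omega), Finset.sum_range_succ, hsum, ← add_assoc]
    have hIcc : (p + 1 + 1 - 1) = p + 1 := rfl
    rw [hIcc, Finset.sum_Icc_succ_top (by omega : 1 ≤ p + 1)]
    -- rewrite B (p+2) (m+1) for m ∈ Icc 1 p
    have hcongr : ∑ m ∈ Finset.Icc 1 p, P m * (((m + 1 : ℕ) : ℝ)⁻¹ • Hb) * B (p + 1 + 1) (m + 1)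
        = (∑ m ∈ Finset.Icc 1 p, P m * (((m + 1 : ℕ) : ℝ)⁻¹ • Hb) * B (p + 1) (m + 1))
            * (1 + ((p + 1 + 1 : ℕ) : ℝ)⁻¹ • Hb) := by
      rw [Matrix.sum_mul]
      refine Finset.sum_congr rfl ?_
      intro m hm
      have hm' := Finset.mem_Icc.mp hm
      rw [hshift (p + 1) (p - m) (m + 1) (by omega)]
      exact (Matrix.mul_assoc _ _ _).symm
    rw [hcongr]
    have hIH : ∑ m ∈ Finset.Icc 1 p, P m * (((m + 1 : ℕ) : ℝ)⁻¹ • Hb) * B (p + 1) (m + 1)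
        = Q (p + 1) - P (p + 1) := by
      have := ih
      rw [show p + 1 - 1 = p from rfl] at this
      rw [this]; abel
    rw [hIH, hBnn, hQ2, Matrix.mul_one]
    have hsm : ((p + 1 + 1 : ℕ) : ℝ)⁻¹ • (Q (p + 1) * Hb)
        = Q (p + 1) * (((p + 1 + 1 : ℕ) : ℝ)⁻¹ • Hb) := by
      exact (Matrix.mul_smul _ _ _).symm
    simp only [hsm, Matrix.mul_add, Matrix.sub_mul, Matrix.mul_one]
    abel
end

section
/- Let a, b be nonnegative integers and let λ, μ be complex numbers with Re(λ) < 1, Re(μ) < 1, and Re(λ+μ) < 1. Then ∫₀¹ [∫_x^1 (y/x)^λ (1/y)(ln(y/x))^a/a! dy][∫_x^1 (y/x)^μ (1/y)(ln(y/x))^b/b! dy] dx = Σ_{l=0}^{a} ((b+l)!/(l! b!)) (1−λ)^{−(a−l+1)} (1−λ−μ)^{−(b+l+1)} + Σ_{l=0}^{b} ((a+l)!/(l! a!)) (1−μ)^{−(b−l+1)} (1−λ−μ)^{−(a+l+1)}. -/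
/-!
Substituting `u = log (y / x)` turns the inner integrals into `F n c t = ∫₀ᵗ e^{cu} uⁿ/n! du` at
`t = -log x`, and `x = e^{-t}` turns the outer integral into the Laplace transform of
`F a λ * F b μ` at `1`. Since `F _ _ 0 = 0`, integration by parts gives `L[g] s = L[g'] s / s`;
by the product rule and the shift `L[e^{ct} g] s = L[g] (s - c)` this reduces everything to
`L[tᵃ/a! · F b μ]`, which the same identity computes by induction on `a`, down to
`L[tⁿ/n!] s = s^{-(n+1)}`. All functions involved grow at most exponentially, at a rate below
the real part of the Laplace variable, which is what makes every integral converge.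
-/

open Complex MeasureTheory Set Filter Asymptotics Topology

/-- Asking for `O(e^{βt})` for every `β > σ`, rather than `O(e^{σt})`, lets the class absorb
polynomial factors. -/
def ExpOrderLE {E : Type*} [Norm E] (g : ℝ → E) (σ : ℝ) : Prop :=
  ∀ β, σ < β → g =O[atTop] fun t => Real.exp (β * t)

namespace ExpOrderLE

variable {E : Type*} {σ τ : ℝ}

theorem mono [Norm E] {g : ℝ → E} (hg : ExpOrderLE g σ) (h : σ ≤ τ) : ExpOrderLE g τ :=
  fun β hβ => hg β (h.trans_lt hβ)

theorem of_isBigO [Norm E] {F : Type*} [SeminormedAddCommGroup F] {f : ℝ → E} {g : ℝ → F}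
    (h : f =O[atTop] g) (hg : ExpOrderLE g σ) : ExpOrderLE f σ :=
  fun β hβ => h.trans (hg β hβ)

theorem add [SeminormedAddCommGroup E] {f g : ℝ → E} (hf : ExpOrderLE f σ)
    (hg : ExpOrderLE g σ) : ExpOrderLE (fun t => f t + g t) σ :=
  fun β hβ => (hf β hβ).add (hg β hβ)

theorem mul [SeminormedRing E] {f g : ℝ → E} (hf : ExpOrderLE f σ) (hg : ExpOrderLE g τ) :
    ExpOrderLE (fun t => f t * g t) (σ + τ) := by
  intro β hβ
  refine ((hf (σ + (β - σ - τ) / 2) (by linarith)).mul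
    (hg (τ + (β - σ - τ) / 2) (by linarith))).congr_right fun t => ?_
  rw [← Real.exp_add]
  congr 1
  ring

theorem const_mul [SeminormedRing E] {g : ℝ → E} (hg : ExpOrderLE g σ) (c : E) :
    ExpOrderLE (fun t => c * g t) σ :=
  fun β hβ => (hg β hβ).const_mul_left c

theorem div_const [NormedDivisionRing E] {g : ℝ → E} (hg : ExpOrderLE g σ) (c : E) :
    ExpOrderLE (fun t => g t / c) σ :=
  (hg.const_mul c⁻¹).of_isBigO <| isBigO_of_le _ fun t => by
    rw [div_eq_mul_inv, norm_mul, norm_mul, mul_comm]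

theorem tendsto_zero [NormedAddCommGroup E] {g : ℝ → E} (hg : ExpOrderLE g σ) (hσ : σ < 0) :
    Tendsto g atTop (𝓝 0) :=
  (hg (σ / 2) (by linarith)).trans_tendsto <|
    Real.tendsto_exp_atBot.comp (tendsto_id.const_mul_atTop_of_neg (by linarith))

theorem integrableOn_Ioi [NormedAddCommGroup E] {g : ℝ → E} (hg : ExpOrderLE g σ)
    (hσ : σ < 0) {a : ℝ} (hc : ContinuousOn g (Ici a)) : IntegrableOn g (Ioi a) := by
  have hexp : IntegrableOn (fun t => Real.exp (σ / 2 * t)) (Ioi a) := by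
    simpa using exp_neg_integrableOn_Ioi a (b := -(σ / 2)) (by linarith)
  exact ((hc.locallyIntegrableOn measurableSet_Ici).integrableOn_of_isBigO_atTop
    (hg (σ / 2) (by linarith)) ⟨Ioi a, Ioi_mem_atTop a, hexp⟩).mono_set Ioi_subset_Ici_self

end ExpOrderLE

theorem expOrderLE_exp (σ : ℝ) : ExpOrderLE (fun t => Real.exp (σ * t)) σ := by
  intro β hβ
  refine IsBigO.of_bound 1 ?_
  filter_upwards [eventually_ge_atTop 0] with t ht
  simp only [Real.norm_eq_abs, Real.abs_exp, one_mul]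
  exact Real.exp_le_exp.2 (by nlinarith)

theorem expOrderLE_cexp (c : ℂ) : ExpOrderLE (fun t : ℝ => cexp (c * t)) c.re :=
  (expOrderLE_exp c.re).of_isBigO <| isBigO_of_le _ fun t => by
    simp [Complex.norm_exp]

theorem expOrderLE_pow (n : ℕ) : ExpOrderLE (fun t : ℝ => t ^ n) 0 :=
  fun _ hβ => (isLittleO_pow_exp_pos_mul_atTop n hβ).isBigO

theorem expOrderLE_ofReal_pow (n : ℕ) : ExpOrderLE (fun t : ℝ => (t : ℂ) ^ n) 0 :=
  (expOrderLE_pow n).of_isBigO <| isBigO_of_le _ fun t => by simp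

noncomputable def laplaceTransform (g : ℝ → ℂ) (s : ℂ) : ℂ :=
  ∫ t in Ioi (0 : ℝ), cexp (-s * t) * g t

section Laplace

variable {σ : ℝ} {s : ℂ}

theorem ExpOrderLE.integrableOn_laplace {g : ℝ → ℂ} (hg : ExpOrderLE g σ) (hc : Continuous g)
    (hs : σ < s.re) : IntegrableOn (fun t : ℝ => cexp (-s * t) * g t) (Ioi 0) :=
  ((expOrderLE_cexp (-s)).mul hg).integrableOn_Ioi (by simp; linarith) (by fun_prop)

theorem laplaceTransform_deriv {g g' : ℝ → ℂ} (hderiv : ∀ t, HasDerivAt g (g' t) t)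
    (hcont' : Continuous g') (hg : ExpOrderLE g σ) (hg' : ExpOrderLE g' σ) (hs : σ < s.re) :
    laplaceTransform g' s = s * laplaceTransform g s - g 0 := by
  have hgc : Continuous g := continuous_iff_continuousAt.2 fun t => (hderiv t).continuousAt
  have hu (t : ℝ) : HasDerivAt (fun t : ℝ => cexp (-s * t)) (-s * cexp (-s * t)) t := by
    simpa [mul_comm] using ((hasDerivAt_id (t : ℂ)).const_mul (-s)).cexp.comp_ofReal
  have parts := integral_Ioi_mul_deriv_eq_deriv_mul (fun t _ => hu t) (fun t _ => hderiv t)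
    (hg'.integrableOn_laplace hcont' hs)
    (IntegrableOn.congr_fun ((hg.integrableOn_laplace hgc hs).const_mul (-s))
      (fun t _ => by simp only [Pi.mul_apply]; ring) measurableSet_Ioi)
    (((by fun_prop : Continuous fun t : ℝ => cexp (-s * t) * g t).tendsto 0).mono_left
      nhdsWithin_le_nhds)
    (((expOrderLE_cexp (-s)).mul hg).tendsto_zero (by simp; linarith))
  simp only [ofReal_zero, mul_zero, Complex.exp_zero, one_mul] at parts
  rw [laplaceTransform, laplaceTransform, parts]
  simp only [mul_assoc, integral_const_mul]
  ring

theorem laplaceTransform_const_mul (c : ℂ) (g : ℝ → ℂ) :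
    laplaceTransform (fun t => c * g t) s = c * laplaceTransform g s := by
  simp only [laplaceTransform, ← integral_const_mul]
  congr 1 with t
  ring

theorem laplaceTransform_add {f g : ℝ → ℂ}
    (hf : IntegrableOn (fun t : ℝ => cexp (-s * t) * f t) (Ioi 0))
    (hg : IntegrableOn (fun t : ℝ => cexp (-s * t) * g t) (Ioi 0)) :
    laplaceTransform (fun t => f t + g t) s = laplaceTransform f s + laplaceTransform g s := by
  simp only [laplaceTransform, mul_add]
  exact integral_add hf hg

theorem laplaceTransform_exp_mul (c : ℂ) (g : ℝ → ℂ) :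
    laplaceTransform (fun t => cexp (c * t) * g t) s = laplaceTransform g (s - c) := by
  simp only [laplaceTransform, ← mul_assoc, ← Complex.exp_add]
  congr 1 with t
  ring_nf

theorem laplaceTransform_pow_div_factorial (n : ℕ) (hs : 0 < s.re) :
    laplaceTransform (fun t => (t : ℂ) ^ n / n.factorial) s = (s ^ (n + 1))⁻¹ := by
  have hs0 : s ≠ 0 := fun h => by simp [h] at hs
  induction n with
  | zero =>
    simpa [laplaceTransform, hs0] using integral_exp_mul_complex_Ioi (a := -s) (by simpa) 0
  | succ n ih =>
    have hderiv : ∀ t : ℝ, HasDerivAt (fun t : ℝ => (t : ℂ) ^ (n + 1) / (n + 1).factorial)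
        ((t : ℂ) ^ n / n.factorial) t := fun t => by
      refine (((hasDerivAt_pow (n + 1) (t : ℂ)).comp_ofReal).div_const _).congr_deriv ?_
      push_cast [Nat.factorial_succ, Nat.add_sub_cancel]
      field_simp
    have key := laplaceTransform_deriv hderiv (by fun_prop)
      ((expOrderLE_ofReal_pow _).div_const _) ((expOrderLE_ofReal_pow _).div_const _) hs
    rw [ih] at key
    simp only [ofReal_zero, ne_eq, Nat.add_eq_zero_iff, one_ne_zero, and_false,
      not_false_eq_true, zero_pow, zero_div, sub_zero] at key
    rw [pow_succ, mul_inv, key, mul_comm, inv_mul_cancel_left₀ hs0]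

end Laplace

noncomputable def expPow (n : ℕ) (c : ℂ) (t : ℝ) : ℂ :=
  cexp (c * t) * ((t : ℂ) ^ n / n.factorial)

noncomputable def expPowIntegral (n : ℕ) (c : ℂ) (t : ℝ) : ℂ :=
  ∫ u in (0 : ℝ)..t, expPow n c u

section ExpPow

variable (n : ℕ) (c : ℂ)

theorem continuous_expPow : Continuous (expPow n c) := by
  unfold expPow
  fun_prop

theorem expOrderLE_expPow : ExpOrderLE (expPow n c) c.re :=
  ((expOrderLE_cexp c).mul ((expOrderLE_ofReal_pow n).div_const _)).mono (add_zero _).le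

theorem laplaceTransform_expPow {s : ℂ} (hs : c.re < s.re) :
    laplaceTransform (expPow n c) s = ((s - c) ^ (n + 1))⁻¹ :=
  (laplaceTransform_exp_mul c _).trans
    (laplaceTransform_pow_div_factorial n (by simpa using hs))

theorem norm_expPow_le {t u : ℝ} (hu : u ∈ Icc 0 t) :
    ‖expPow n c u‖ ≤ t ^ n / n.factorial * Real.exp (max c.re 0 * t) := by
  obtain ⟨hu0, hut⟩ := hu
  rw [expPow, norm_mul, norm_div, norm_pow, Complex.norm_exp, norm_real, norm_natCast,
    Real.norm_of_nonneg hu0, mul_comm]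
  have ht : 0 ≤ t := hu0.trans hut
  gcongr
  rw [re_mul_ofReal]
  calc c.re * u ≤ max c.re 0 * u := mul_le_mul_of_nonneg_right (le_max_left _ _) hu0
    _ ≤ max c.re 0 * t := mul_le_mul_of_nonneg_left hut (le_max_right _ _)

theorem hasDerivAt_expPowIntegral (t : ℝ) : HasDerivAt (expPowIntegral n c) (expPow n c t) t :=
  intervalIntegral.integral_hasDerivAt_right ((continuous_expPow n c).intervalIntegrable _ _)
    ((continuous_expPow n c).stronglyMeasurableAtFilter _ _) (continuous_expPow n c).continuousAt

theorem continuous_expPowIntegral : Continuous (expPowIntegral n c) :=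
  continuous_iff_continuousAt.2 fun t => (hasDerivAt_expPowIntegral n c t).continuousAt

theorem expPowIntegral_zero : expPowIntegral n c 0 = 0 :=
  intervalIntegral.integral_same

theorem norm_expPowIntegral_le {t : ℝ} (ht : 0 ≤ t) :
    ‖expPowIntegral n c t‖ ≤ t ^ (n + 1) / n.factorial * Real.exp (max c.re 0 * t) := by
  have := intervalIntegral.norm_integral_le_of_norm_le_const (a := 0) (b := t)
    fun u hu => norm_expPow_le n c (Ioc_subset_Icc_self (uIoc_of_le ht ▸ hu))
  rw [sub_zero, abs_of_nonneg ht] at this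
  rw [expPowIntegral]
  convert this using 1
  ring

theorem expOrderLE_expPowIntegral : ExpOrderLE (expPowIntegral n c) (max c.re 0) := by
  refine ExpOrderLE.of_isBigO (IsBigO.of_bound 1 ?_) (by
    simpa using ((expOrderLE_pow (n + 1)).div_const (n.factorial : ℝ)).mul
      (expOrderLE_exp (max c.re 0)))
  filter_upwards [eventually_ge_atTop 0] with t ht
  rw [one_mul, Real.norm_of_nonneg (by positivity)]
  exact norm_expPowIntegral_le n c ht

end ExpPow

theorem pow_div_factorial_mul_expPow (a b : ℕ) (μ : ℂ) (t : ℝ) :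
    (t : ℂ) ^ a / a.factorial * expPow b μ t =
      ((b + a).factorial : ℂ) / (a.factorial * b.factorial) * expPow (b + a) μ t := by
  have : ((b + a).factorial : ℂ) ≠ 0 := Nat.cast_ne_zero.2 (Nat.factorial_ne_zero _)
  unfold expPow
  rw [pow_add]
  field_simp

theorem sum_range_succ_mul_pow_mul_pow (c : ℕ → ℂ) (a b : ℕ) (u v : ℂ) :
    ∑ i ∈ Finset.range (a + 1 + 1), c i * u ^ (a + 1 - i + 1) * v ^ (b + i + 1) =
      u * (∑ i ∈ Finset.range (a + 1), c i * u ^ (a - i + 1) * v ^ (b + i + 1) +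
        c (a + 1) * v ^ (b + (a + 1) + 1)) := by
  rw [Finset.sum_range_succ, mul_add, Finset.mul_sum, Nat.sub_self]
  congr 1
  · refine Finset.sum_congr rfl fun i hi => ?_
    rw [Nat.sub_add_comm (Finset.mem_range_succ_iff.1 hi), pow_succ]
    ring
  · ring

theorem laplaceTransform_pow_mul_expPowIntegral (a b : ℕ) {μ s : ℂ} (hs : 0 < s.re)
    (hsμ : μ.re < s.re) :
    laplaceTransform (fun t => (t : ℂ) ^ a / a.factorial * expPowIntegral b μ t) s =
      ∑ i ∈ Finset.range (a + 1), ((b + i).factorial : ℂ) / (i.factorial * b.factorial) *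
        s⁻¹ ^ (a - i + 1) * (s - μ)⁻¹ ^ (b + i + 1) := by
  have hσ : max μ.re 0 < s.re := max_lt hsμ hs
  have hs0 : s ≠ 0 := fun h => by simp [h] at hs
  have horder (k : ℕ) : ExpOrderLE
      (fun t : ℝ => (t : ℂ) ^ k / k.factorial * expPowIntegral b μ t) (max μ.re 0) := by
    simpa using ((expOrderLE_ofReal_pow k).div_const _).mul (expOrderLE_expPowIntegral b μ)
  have hcont (k : ℕ) :
      Continuous fun t : ℝ => (t : ℂ) ^ k / k.factorial * expPowIntegral b μ t := by
    have := continuous_expPowIntegral b μ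
    fun_prop
  induction a with
  | zero =>
    have key := laplaceTransform_deriv (hasDerivAt_expPowIntegral b μ) (continuous_expPow b μ)
      (expOrderLE_expPowIntegral b μ) ((expOrderLE_expPow b μ).mono (le_max_left _ _)) hσ
    rw [laplaceTransform_expPow b μ hsμ, expPowIntegral_zero, sub_zero] at key
    have hL : laplaceTransform (expPowIntegral b μ) s = s⁻¹ * ((s - μ) ^ (b + 1))⁻¹ := by
      rw [key, inv_mul_cancel_left₀ hs0]
    simpa [inv_pow, Nat.factorial_ne_zero] using hL
  | succ a ih =>
    have hderiv : ∀ t : ℝ, HasDerivAt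
        (fun t : ℝ => (t : ℂ) ^ (a + 1) / (a + 1).factorial * expPowIntegral b μ t)
        ((t : ℂ) ^ a / a.factorial * expPowIntegral b μ t +
          (t : ℂ) ^ (a + 1) / (a + 1).factorial * expPow b μ t) t := fun t => by
      refine ((((hasDerivAt_pow (a + 1) (t : ℂ)).comp_ofReal).div_const _).mul
        (hasDerivAt_expPowIntegral b μ t)).congr_deriv ?_
      push_cast [Nat.factorial_succ, Nat.add_sub_cancel]
      field_simp
    have hqorder : ExpOrderLE
        (fun t : ℝ => (t : ℂ) ^ (a + 1) / (a + 1).factorial * expPow b μ t) (max μ.re 0) :=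
      (((expOrderLE_ofReal_pow _).div_const _).mul (expOrderLE_expPow b μ)).mono (by simp)
    have hqcont :
        Continuous fun t : ℝ => (t : ℂ) ^ (a + 1) / (a + 1).factorial * expPow b μ t := by
      have := continuous_expPow b μ
      fun_prop
    have key := laplaceTransform_deriv hderiv ((hcont a).add hqcont) (horder (a + 1))
      ((horder a).add hqorder) hσ
    rw [laplaceTransform_add ((horder a).integrableOn_laplace (hcont a) hσ)
      (hqorder.integrableOn_laplace hqcont hσ), ih] at key
    simp only [pow_div_factorial_mul_expPow] at key
    rw [laplaceTransform_const_mul, laplaceTransform_expPow _ _ hsμ] at key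
    rw [expPowIntegral_zero, mul_zero, sub_zero, ← inv_pow] at key
    rw [sum_range_succ_mul_pow_mul_pow, key, inv_mul_cancel_left₀ hs0]

theorem laplaceTransform_expPow_mul (n : ℕ) (c : ℂ) (f : ℝ → ℂ) {s : ℂ} :
    laplaceTransform (fun t => expPow n c t * f t) s =
      laplaceTransform (fun t => (t : ℂ) ^ n / n.factorial * f t) (s - c) := by
  simp only [expPow, mul_assoc]
  exact laplaceTransform_exp_mul c _

theorem laplaceTransform_expPowIntegral_mul_expPowIntegral (a b : ℕ) {l m s : ℂ}
    (hs : 0 < s.re) (hl : l.re < s.re) (hm : m.re < s.re) (hlm : l.re + m.re < s.re) :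
    laplaceTransform (fun t => expPowIntegral a l t * expPowIntegral b m t) s =
      s⁻¹ * ((∑ i ∈ Finset.range (a + 1),
          ((b + i).factorial : ℂ) / (i.factorial * b.factorial) *
            (s - l)⁻¹ ^ (a - i + 1) * (s - l - m)⁻¹ ^ (b + i + 1)) +
        (∑ i ∈ Finset.range (b + 1),
          ((a + i).factorial : ℂ) / (i.factorial * a.factorial) *
            (s - m)⁻¹ ^ (b - i + 1) * (s - l - m)⁻¹ ^ (a + i + 1))) := by
  have hσ : max l.re 0 + max m.re 0 < s.re := by
    simp only [max_def]
    split_ifs <;> linarith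
  have hs0 : s ≠ 0 := fun h => by simp [h] at hs
  have hFa := continuous_expPowIntegral a l
  have hFb := continuous_expPowIntegral b m
  have hfa := continuous_expPow a l
  have hfb := continuous_expPow b m
  have horder₁ : ExpOrderLE (fun t => expPow a l t * expPowIntegral b m t)
      (max l.re 0 + max m.re 0) :=
    ((expOrderLE_expPow a l).mul (expOrderLE_expPowIntegral b m)).mono
      (add_le_add_left (le_max_left _ _) _)
  have horder₂ : ExpOrderLE (fun t => expPowIntegral a l t * expPow b m t)
      (max l.re 0 + max m.re 0) :=
    ((expOrderLE_expPowIntegral a l).mul (expOrderLE_expPow b m)).mono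
      (add_le_add_right (le_max_left _ _) _)
  have key := laplaceTransform_deriv
    (fun t => (hasDerivAt_expPowIntegral a l t).mul (hasDerivAt_expPowIntegral b m t))
    (by fun_prop) ((expOrderLE_expPowIntegral a l).mul (expOrderLE_expPowIntegral b m))
    (horder₁.add horder₂) hσ
  rw [laplaceTransform_add (horder₁.integrableOn_laplace (by fun_prop) hσ)
      (horder₂.integrableOn_laplace (by fun_prop) hσ), laplaceTransform_expPow_mul] at key
  simp only [mul_comm (expPowIntegral a l _) (expPow b m _)] at key
  rw [laplaceTransform_expPow_mul,
    laplaceTransform_pow_mul_expPowIntegral a b (by simpa using hl) (by simp; linarith),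
    laplaceTransform_pow_mul_expPowIntegral b a (by simpa using hm) (by simp; linarith),
    sub_right_comm s m l, Pi.mul_apply, expPowIntegral_zero, zero_mul, sub_zero] at key
  rw [key, inv_mul_cancel_left₀ hs0]
  rfl

theorem intervalIntegral_comp_neg_log (h : ℝ → ℂ) :
    ∫ x in (0 : ℝ)..1, h (-Real.log x) = laplaceTransform h 1 := by
  have himage : (fun t => Real.exp (-t)) '' Ioi 0 = Ioo 0 1 := by
    rw [show (fun t => Real.exp (-t)) = Real.exp ∘ Neg.neg from rfl, image_comp, image_neg_Ioi,
      neg_zero, Real.image_exp_Iio, Real.exp_zero]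
  have hderiv : ∀ t ∈ Ioi (0 : ℝ),
      HasDerivWithinAt (fun t => Real.exp (-t)) (-Real.exp (-t)) (Ioi 0) t := fun t _ =>
    ((hasDerivAt_neg t).exp.congr_deriv (mul_neg_one _)).hasDerivWithinAt
  rw [intervalIntegral.integral_of_le zero_le_one, integral_Ioc_eq_integral_Ioo, ← himage,
    integral_image_eq_integral_abs_deriv_smul measurableSet_Ioi hderiv
      (Real.exp_injective.comp neg_injective).injOn]
  refine setIntegral_congr_fun measurableSet_Ioi fun t _ => ?_
  simp [abs_of_pos (Real.exp_pos _), Complex.ofReal_exp]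

theorem integral_cpow_mul_log_pow_eq_expPowIntegral (n : ℕ) (c : ℂ) {x : ℝ} (hx : 0 < x) :
    ∫ y in x..1, ((y / x : ℝ) : ℂ) ^ c * (1 / (y : ℂ)) * ((Real.log (y / x) : ℂ)) ^ n /
        (n.factorial : ℂ) = expPowIntegral n c (-Real.log x) := by
  have hpos : ∀ y ∈ uIcc x 1, 0 < y := fun y hy => (lt_min hx one_pos).trans_le hy.1
  have key := intervalIntegral.integral_deriv_smul_comp
    (f := fun t => Real.log t - Real.log x) (g := expPow n c)
    (fun t ht => (Real.hasDerivAt_log (hpos t ht).ne').sub_const _)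
    (continuousOn_inv₀.mono fun t ht => (hpos t ht).ne') (continuous_expPow n c)
  simp only [Real.log_one, zero_sub, sub_self] at key
  rw [expPowIntegral, ← key]
  refine intervalIntegral.integral_congr fun y hy => ?_
  have hy := hpos y hy
  have hcpow : ((y / x : ℝ) : ℂ) ^ c = cexp (c * Real.log (y / x)) := by
    rw [cpow_def_of_ne_zero (by exact_mod_cast (div_pos hy hx).ne'),
      ← ofReal_log (div_pos hy hx).le, mul_comm]
  simp only [Function.comp_apply, hcpow, Real.log_div hy.ne' hx.ne', expPow, real_smul]
  push_cast
  ring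

/-- Remark 5.2 integral formula: for nonnegative integers `a, b` and complex
`λ, μ` with `Re λ < 1`, `Re μ < 1`, `Re(λ+μ) < 1`,
`∫₀¹ [∫_x^1 (y/x)^λ (1/y)(ln(y/x))^a/a! dy][∫_x^1 (y/x)^μ (1/y)(ln(y/x))^b/b! dy] dx`
equals the stated double sum. -/
theorem stmt10 (a b : ℕ) (l m : ℂ) (hl : l.re < 1) (hm : m.re < 1) (hlm : (l + m).re < 1) :
    (∫ x in (0:ℝ)..1,
        (∫ y in x..1, ((y / x : ℝ) : ℂ) ^ l * (1 / (y : ℂ)) *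
            ((Real.log (y / x) : ℂ)) ^ a / (a.factorial : ℂ)) *
        (∫ y in x..1, ((y / x : ℝ) : ℂ) ^ m * (1 / (y : ℂ)) *
            ((Real.log (y / x) : ℂ)) ^ b / (b.factorial : ℂ))) =
      (∑ i ∈ Finset.range (a + 1),
          (((b + i).factorial : ℂ) / ((i.factorial : ℂ) * (b.factorial : ℂ))) *
            ((1 - l)⁻¹) ^ (a - i + 1) * ((1 - l - m)⁻¹) ^ (b + i + 1)) +
      (∑ i ∈ Finset.range (b + 1),
          (((a + i).factorial : ℂ) / ((i.factorial : ℂ) * (a.factorial : ℂ))) *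
            ((1 - m)⁻¹) ^ (b - i + 1) * ((1 - l - m)⁻¹) ^ (a + i + 1)) := by
  calc _ = ∫ x in (0 : ℝ)..1,
        expPowIntegral a l (-Real.log x) * expPowIntegral b m (-Real.log x) :=
        intervalIntegral.integral_congr_ae <| Eventually.of_forall fun x hx => by
          rw [uIoc_of_le zero_le_one] at hx
          rw [integral_cpow_mul_log_pow_eq_expPowIntegral a l hx.1,
            integral_cpow_mul_log_pow_eq_expPowIntegral b m hx.1]
    _ = laplaceTransform (fun t => expPowIntegral a l t * expPowIntegral b m t) 1 :=
        intervalIntegral_comp_neg_log fun t => expPowIntegral a l t * expPowIntegral b m t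
    _ = _ := by
        rw [laplaceTransform_expPowIntegral_mul_expPowIntegral a b (by simp) (by simpa)
          (by simpa) (by simpa using hlm), inv_one, one_mul]
end

section
/- Let H̄ be a K×K matrix whose eigenvalues all have real part at most λ with λ < 1, with maximal Jordan block size ν among eigenvalues achieving real part λ, and let B̄_{n,m} = ∏_{j=m+1}^n (I + j^{-1}H̄). Then there exists a constant C such that ‖B̄_{n,m}‖ ≤ C (n/m)^λ (log(n/m) ∨ 1)^{ν−1} for all 1 ≤ m ≤ n. -/
/-!
Write `B̄ₙₘ = Q(H̄)` with `Q = ∏_{m<j≤n} (1 + X/j)`. The value `Q(H̄)` only depends on `Q` modulo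
the minimal polynomial, i.e. on the Taylor coefficients of `Q` of order `k < μ(z)` at each
eigenvalue `z`, where `μ(z)` is the multiplicity of `z` in the minimal polynomial. So `Q(H̄)` is a
linear function of these finitely many coefficients, and each of its entries is bounded by a
constant times the largest of them.

The Taylor expansion of `Q` at `z` is `∏ (1 + z/j + X/j)`, whose `k`-th coefficient is at most
`θ⁻ᵏ ∏ (θ/j + |1 + z/j|) ≤ θ⁻ᵏ exp((Re z + θ) ∑ 1/j + O(1))`. Since
`∑_{m<j≤n} 1/j = log(n/m) + O(1)`, the choice `θ = 1/log(n/m)` gives the bound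
`O(log(n/m)ᵏ (n/m)^{Re z})`. When `Re z = λ` we have `k < μ(z) ≤ ν`; when `Re z < λ` the power of
the logarithm is absorbed by `(n/m)^{Re z - λ}`.
-/

open Finset Polynomial

namespace Polynomial

variable {𝕜 : Type*} [NormedField 𝕜]

theorem norm_coeff_mul_linear_le {P : 𝕜[X]} {θ N : ℝ} (hθ : 0 < θ)
    (hP : ∀ k, ‖P.coeff k‖ ≤ θ⁻¹ ^ k * N) (a b : 𝕜) (k : ℕ) :
    ‖(P * (C a * X + C b)).coeff k‖ ≤ θ⁻¹ ^ k * (N * (θ * ‖a‖ + ‖b‖)) := by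
  rcases k with _ | k
  · have h0 : ‖P.coeff 0‖ ≤ N := by simpa using hP 0
    simp only [mul_coeff_zero, coeff_add, coeff_C_zero, coeff_X_zero, mul_zero, zero_add,
      norm_mul, pow_zero, one_mul]
    grw [h0]
    exact mul_le_mul_of_nonneg_left (le_add_of_nonneg_left (by positivity))
      ((norm_nonneg _).trans h0)
  · rw [mul_add, ← mul_assoc, coeff_add, coeff_mul_X, coeff_mul_C, coeff_mul_C]
    calc ‖P.coeff k * a + P.coeff (k + 1) * b‖
        ≤ θ⁻¹ ^ k * N * ‖a‖ + θ⁻¹ ^ (k + 1) * N * ‖b‖ := by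
          grw [norm_add_le, norm_mul, norm_mul, hP k, hP (k + 1)]
      _ = θ⁻¹ ^ (k + 1) * (N * (θ * ‖a‖ + ‖b‖)) := by
          linear_combination (-(θ⁻¹ ^ k * N * ‖a‖)) * inv_mul_cancel₀ hθ.ne'

theorem norm_coeff_prod_linear_le {ι : Type*} (s : Finset ι) (a b : ι → 𝕜) {θ : ℝ}
    (hθ : 0 < θ) (k : ℕ) :
    ‖(∏ j ∈ s, (C (a j) * X + C (b j))).coeff k‖ ≤
      θ⁻¹ ^ k * ∏ j ∈ s, (θ * ‖a j‖ + ‖b j‖) := by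
  classical
  induction s using Finset.induction_on generalizing k with
  | empty =>
    rcases k with _ | k <;> simp [coeff_one]; positivity
  | insert j s hj ih =>
    rw [prod_insert hj, prod_insert hj, mul_comm, mul_comm (θ * ‖a j‖ + ‖b j‖)]
    exact norm_coeff_mul_linear_le hθ ih (a j) (b j) k

theorem taylor_prod_C_mul_X_add_one {R ι : Type*} [CommRing R] (z : R) (s : Finset ι)
    (a : ι → R) :
    taylor z (∏ j ∈ s, (C (a j) * X + 1)) = ∏ j ∈ s, (C (a j) * X + C (1 + z * a j)) := by
  change taylorAlgHom z _ = _
  rw [map_prod]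
  refine prod_congr rfl fun j _ => ?_
  simp only [taylorAlgHom_apply, taylor_apply, add_comp, mul_comp, C_comp, X_comp, one_comp]
  rw [C_add, C_mul, C_1]; ring

theorem dvd_of_forall_taylor_coeff_eq_zero {k : Type*} [Field k] [IsAlgClosed k]
    {p q : k[X]} (hp : p ≠ 0)
    (h : ∀ z ∈ p.roots, ∀ i < p.rootMultiplicity z, (taylor z q).coeff i = 0) : p ∣ q := by
  classical
  rcases eq_or_ne q 0 with rfl | hq
  · exact dvd_zero p
  rw [IsAlgClosed.dvd_iff_roots_le_roots hp hq, Multiset.le_iff_count]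
  intro z
  rw [count_roots, count_roots]
  by_cases hz : z ∈ p.roots
  · rw [rootMultiplicity_eq_natTrailingDegree (p := q), ← taylor_apply]
    exact le_natTrailingDegree (mt (taylor_eq_zero z q).1 hq) (h z hz)
  · rw [← count_roots, Multiset.count_eq_zero.2 hz]
    exact Nat.zero_le _

end Polynomial

theorem Matrix.map_ofReal_eq_aeval_prod {ι : Type*} [Fintype ι] [DecidableEq ι]
    {H : Matrix ι ι ℝ} {B : ℕ → ℕ → Matrix ι ι ℝ} (hBnn : ∀ n, B n n = 1)
    (hBrec : ∀ n i, i < n → B n i = (1 + ((i + 1 : ℕ) : ℝ)⁻¹ • H) * B n (i + 1))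
    {m n : ℕ} (hmn : m ≤ n) :
    (B n m).map Complex.ofReal =
      aeval (H.map Complex.ofReal) (∏ j ∈ Ioc m n, (C (j : ℂ)⁻¹ * X + 1)) := by
  induction hmn using Nat.decreasingInduction with
  | self => simp [hBnn]
  | of_succ k hk ih =>
    have hmul (P Q : Matrix ι ι ℝ) :
        (P * Q).map Complex.ofReal = P.map Complex.ofReal * Q.map Complex.ofReal :=
      Matrix.map_mul (f := Complex.ofRealHom)
    rw [hBrec n k hk, hmul, ih, ← insert_Ioc_add_one_left_eq_Ioc hk,
      prod_insert left_notMem_Ioc, map_mul]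
    congr 1
    rw [map_add, map_mul, aeval_C, aeval_X, map_one, ← Algebra.smul_def, add_comm]
    ext i j
    simp [Matrix.one_apply, apply_ite]

theorem LinearMap.exists_norm_le_mul_norm_of_ker_le {𝕜 E F G : Type*} [NontriviallyNormedField 𝕜]
    [CompleteSpace 𝕜] [AddCommGroup E] [Module 𝕜 E] [NormedAddCommGroup F] [NormedSpace 𝕜 F]
    [FiniteDimensional 𝕜 F] [NormedAddCommGroup G] [NormedSpace 𝕜 G]
    (D : E →ₗ[𝕜] F) (Ψ : E →ₗ[𝕜] G) (h : ker D ≤ ker Ψ) :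
    ∃ M : ℝ, 0 ≤ M ∧ ∀ x, ‖Ψ x‖ ≤ M * ‖D x‖ := by
  let Φ : range D →ₗ[𝕜] G := (ker D).liftQ Ψ h ∘ₗ (D.quotKerEquivRange).symm.toLinearMap
  have hΦ (x : E) : Φ ⟨D x, mem_range_self D x⟩ = Ψ x := by
    have hx : (⟨D x, mem_range_self D x⟩ : range D) =
        D.quotKerEquivRange (Submodule.Quotient.mk x) :=
      Subtype.ext (D.quotKerEquivRange_apply_mk x).symm
    simp only [Φ, coe_comp, LinearEquiv.coe_coe, Function.comp_apply, hx,
      LinearEquiv.symm_apply_apply, Submodule.liftQ_apply]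
  refine ⟨‖LinearMap.toContinuousLinearMap Φ‖, norm_nonneg _, fun x => ?_⟩
  rw [← hΦ]
  exact (LinearMap.toContinuousLinearMap Φ).le_opNorm _

theorem Matrix.exists_norm_aeval_apply_le {𝕜 n : Type*} [NontriviallyNormedField 𝕜]
    [CompleteSpace 𝕜] [IsAlgClosed 𝕜] [Fintype n] [DecidableEq n] (A : Matrix n n 𝕜) :
    ∃ M : ℝ, ∀ (Q : 𝕜[X]) (c : ℝ), 0 ≤ c →
      (∀ z ∈ (minpoly 𝕜 A).roots, ∀ k < (minpoly 𝕜 A).rootMultiplicity z,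
        ‖(taylor z Q).coeff k‖ ≤ c) →
      ∀ i j, ‖aeval A Q i j‖ ≤ M * c := by
  classical
  set p := minpoly 𝕜 A
  have hp : p ≠ 0 := minpoly.ne_zero (Algebra.IsIntegral.isIntegral A)
  let ι := Σ z : p.roots.toFinset, Fin (p.rootMultiplicity z.1)
  let D : 𝕜[X] →ₗ[𝕜] ι → 𝕜 := LinearMap.pi fun q => (lcoeff 𝕜 q.2).comp (taylor q.1.1)
  let Ψ : 𝕜[X] →ₗ[𝕜] n → n → 𝕜 :=
    (Matrix.ofLinearEquiv 𝕜).symm.toLinearMap ∘ₗ (aeval A).toLinearMap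
  obtain ⟨M, hM0, hM⟩ := D.exists_norm_le_mul_norm_of_ker_le Ψ fun Q hQ => by
    have hpQ : p ∣ Q := dvd_of_forall_taylor_coeff_eq_zero hp fun z hz i hi =>
      congrFun hQ ⟨⟨z, Multiset.mem_toFinset.2 hz⟩, ⟨i, hi⟩⟩
    simp [Ψ, (minpoly.dvd_iff).1 hpQ]
  refine ⟨M, fun Q c hc0 hc i j => ?_⟩
  have hDQ : ‖D Q‖ ≤ c := (pi_norm_le_iff_of_nonneg hc0).2 fun q =>
    hc q.1 (Multiset.mem_toFinset.1 q.1.2) q.2 q.2.2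
  calc ‖aeval A Q i j‖ = ‖Ψ Q i j‖ := rfl
    _ ≤ ‖Ψ Q‖ := (norm_le_pi_norm _ j).trans (norm_le_pi_norm _ i)
    _ ≤ M * c := by grw [hM Q, hDQ]

theorem Complex.mul_add_norm_one_add_mul_le_exp (z : ℂ) (θ t : ℝ) :
    θ * t + ‖1 + z * t‖ ≤ Real.exp ((z.re + θ) * t + ‖z‖ ^ 2 / 2 * t ^ 2) := by
  have hsq : ‖1 + z * t‖ ^ 2 = 1 + 2 * z.re * t + ‖z‖ ^ 2 * t ^ 2 := by
    rw [Complex.sq_norm, Complex.normSq_apply, Complex.sq_norm, Complex.normSq_apply]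
    simp only [Complex.add_re, Complex.add_im, Complex.mul_re, Complex.mul_im,
      Complex.ofReal_re, Complex.ofReal_im, Complex.one_re, Complex.one_im]
    ring
  have hre : z.re ^ 2 ≤ ‖z‖ ^ 2 := by
    simpa [sq_abs] using pow_le_pow_left₀ (abs_nonneg _) (Complex.abs_re_le_norm z) 2
  have hle : ‖1 + z * t‖ ≤ 1 + z.re * t + ‖z‖ ^ 2 / 2 * t ^ 2 := by
    have hre_t := mul_le_mul_of_nonneg_right hre (sq_nonneg t)
    refine le_of_pow_le_pow_left₀ two_ne_zero ?_ ?_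
    · nlinarith [sq_nonneg (z.re * t + 1)]
    · rw [hsq]
      nlinarith [sq_nonneg (z.re * t + ‖z‖ ^ 2 / 2 * t ^ 2)]
  linarith [Real.add_one_le_exp ((z.re + θ) * t + ‖z‖ ^ 2 / 2 * t ^ 2)]

theorem abs_sum_Ioc_inv_sub_log_le {m n : ℕ} (hm : 1 ≤ m) (hmn : m ≤ n) :
    |∑ j ∈ Ioc m n, (j : ℝ)⁻¹ - Real.log (n / m)| ≤ 1 := by
  have hsum : ∑ j ∈ Ioc m n, (j : ℝ)⁻¹ = harmonic n - harmonic m := by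
    have hH (k : ℕ) : (harmonic k : ℝ) = ∑ j ∈ Ioc 0 k, (j : ℝ)⁻¹ := by
      simp [harmonic_eq_sum_Icc, ← Icc_add_one_left_eq_Ioc]
    rw [hH, hH, ← sum_Ioc_consecutive _ (Nat.zero_le m) hmn, add_sub_cancel_left]
  have hm0 : (0 : ℝ) < m := by exact_mod_cast hm
  have hn0 : (0 : ℝ) < n := hm0.trans_le (by exact_mod_cast hmn)
  have h1 := harmonic_le_one_add_log n
  have h2 := log_add_one_le_harmonic m
  have h3 := harmonic_le_one_add_log m
  have h4 := log_add_one_le_harmonic n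
  have h5 : Real.log m ≤ Real.log ↑(m + 1) := Real.log_le_log hm0 (by push_cast; linarith)
  have h6 : Real.log n ≤ Real.log ↑(n + 1) := Real.log_le_log hn0 (by push_cast; linarith)
  rw [abs_le, hsum, Real.log_div hn0.ne' hm0.ne']
  constructor <;> linarith

theorem sum_Ioc_inv_sq_le_one {m n : ℕ} (hm : 1 ≤ m) (hmn : m ≤ n) :
    ∑ j ∈ Ioc m n, ((j : ℝ) ^ 2)⁻¹ ≤ 1 := by
  have hm' : (1 : ℝ) ≤ m := by exact_mod_cast hm
  grw [sum_Ioc_inv_sq_le_sub (by omega) hmn, inv_le_one_of_one_le₀ hm']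
  simp

theorem one_le_log_max_exp (y : ℝ) : 1 ≤ Real.log (max y (Real.exp 1)) := by
  simpa using Real.log_le_log (Real.exp_pos 1) (le_max_right y (Real.exp 1))

theorem exists_pow_log_max_exp_mul_rpow_neg_le {ε : ℝ} (hε : 0 < ε) (k : ℕ) :
    ∃ c : ℝ, ∀ y : ℝ, 1 ≤ y → Real.log (max y (Real.exp 1)) ^ k * y ^ (-ε) ≤ c := by
  set δ : ℝ := ε / (k + 1)
  have hδ : 0 < δ := by positivity
  have hδk : δ * k - ε ≤ 0 := by
    have : δ * (k + 1) = ε := div_mul_cancel₀ ε (by positivity)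
    linarith
  refine ⟨(Real.exp δ / δ) ^ k, fun y hy => ?_⟩
  have hy0 : 0 < y := one_pos.trans_le hy
  have hmax : max y (Real.exp 1) ≤ Real.exp 1 * y :=
    max_le (le_mul_of_one_le_left hy0.le (Real.one_le_exp zero_le_one))
      (le_mul_of_one_le_right (Real.exp_pos 1).le hy)
  have hL : Real.log (max y (Real.exp 1)) ≤ Real.exp δ / δ * y ^ δ :=
    calc Real.log (max y (Real.exp 1)) ≤ max y (Real.exp 1) ^ δ / δ :=
          Real.log_le_rpow_div (by positivity) hδ
      _ ≤ (Real.exp 1 * y) ^ δ / δ := by gcongr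
      _ = Real.exp δ / δ * y ^ δ := by
          rw [Real.mul_rpow (Real.exp_pos 1).le hy0.le, Real.exp_one_rpow]; ring
  have hL0 := zero_le_one.trans (one_le_log_max_exp y)
  calc Real.log (max y (Real.exp 1)) ^ k * y ^ (-ε)
      ≤ (Real.exp δ / δ * y ^ δ) ^ k * y ^ (-ε) := by gcongr
    _ = (Real.exp δ / δ) ^ k * y ^ (δ * k - ε) := by
        rw [mul_pow, ← Real.rpow_mul_natCast hy0.le, sub_eq_add_neg, Real.rpow_add hy0, mul_assoc]
    _ ≤ (Real.exp δ / δ) ^ k := by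
        grw [Real.rpow_le_one_of_one_le_of_nonpos hy hδk, mul_one]

theorem exists_pow_log_max_exp_mul_rpow_le {x lam : ℝ} {k ν : ℕ} (hx : x ≤ lam)
    (hk : x = lam → k ≤ ν - 1) :
    ∃ c : ℝ, ∀ y : ℝ, 1 ≤ y → Real.log (max y (Real.exp 1)) ^ k * y ^ x ≤
      c * y ^ lam * Real.log (max y (Real.exp 1)) ^ (ν - 1) := by
  rcases hx.eq_or_lt with rfl | hlt
  · refine ⟨1, fun y _ => ?_⟩
    rw [one_mul, mul_comm]
    gcongr
    · exact one_le_log_max_exp y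
    · exact hk rfl
  · obtain ⟨c, hc⟩ := exists_pow_log_max_exp_mul_rpow_neg_le (sub_pos.2 hlt) k
    refine ⟨max c 0, fun y hy => ?_⟩
    have hy0 : 0 < y := one_pos.trans_le hy
    have hL := one_le_log_max_exp y
    calc Real.log (max y (Real.exp 1)) ^ k * y ^ x
        = Real.log (max y (Real.exp 1)) ^ k * y ^ (-(lam - x)) * y ^ lam := by
          rw [mul_assoc, ← Real.rpow_add hy0]; ring_nf
      _ ≤ max c 0 * y ^ lam * 1 := by
          rw [mul_one]; gcongr; exact (hc y hy).trans (le_max_left _ _)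
      _ ≤ max c 0 * y ^ lam * Real.log (max y (Real.exp 1)) ^ (ν - 1) := by
          gcongr; exact one_le_pow₀ hL

theorem norm_coeff_prod_le_mul_pow_log_mul_rpow (z : ℂ) (k : ℕ) {m n : ℕ} (hm : 1 ≤ m)
    (hmn : m ≤ n) :
    ‖(∏ j ∈ Ioc m n, (C (j : ℂ)⁻¹ * X + C (1 + z * (j : ℂ)⁻¹))).coeff k‖ ≤
      Real.exp (2 + |z.re| + ‖z‖ ^ 2 / 2) * Real.log (max ((n : ℝ) / m) (Real.exp 1)) ^ k *
        ((n : ℝ) / m) ^ z.re := by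
  set y : ℝ := n / m
  set L := Real.log (max y (Real.exp 1))
  set H := ∑ j ∈ Ioc m n, (j : ℝ)⁻¹
  set S := ∑ j ∈ Ioc m n, ((j : ℝ) ^ 2)⁻¹
  have hy0 : 0 < y := div_pos (by exact_mod_cast hm.trans hmn) (by exact_mod_cast hm)
  have hL : 1 ≤ L := one_le_log_max_exp y
  have hθ : 0 < L⁻¹ := by positivity
  have hlogy : Real.log y ≤ L := Real.log_le_log hy0 (le_max_left _ _)
  have hexponent : (z.re + L⁻¹) * H + ‖z‖ ^ 2 / 2 * S ≤
      z.re * Real.log y + (2 + |z.re| + ‖z‖ ^ 2 / 2) := by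
    have hH : (z.re + L⁻¹) * (H - Real.log y) ≤ |z.re| + 1 :=
      calc (z.re + L⁻¹) * (H - Real.log y) ≤ |z.re + L⁻¹| * 1 := by
            grw [← abs_sum_Ioc_inv_sub_log_le hm hmn, ← abs_mul]; exact le_abs_self _
        _ ≤ |z.re| + 1 := by
            grw [mul_one, abs_add_le, abs_of_pos hθ, inv_le_one_of_one_le₀ hL]
    have hθy : L⁻¹ * Real.log y ≤ 1 := by
      grw [hlogy, inv_mul_cancel₀ (by positivity)]
    have hS : ‖z‖ ^ 2 / 2 * S ≤ ‖z‖ ^ 2 / 2 :=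
      mul_le_of_le_one_right (by positivity) (sum_Ioc_inv_sq_le_one hm hmn)
    linarith
  calc ‖(∏ j ∈ Ioc m n, (C (j : ℂ)⁻¹ * X + C (1 + z * (j : ℂ)⁻¹))).coeff k‖
      ≤ L⁻¹⁻¹ ^ k * ∏ j ∈ Ioc m n, (L⁻¹ * ‖(j : ℂ)⁻¹‖ + ‖1 + z * (j : ℂ)⁻¹‖) :=
        norm_coeff_prod_linear_le _ _ _ hθ k
    _ ≤ L ^ k * ∏ j ∈ Ioc m n,
          Real.exp ((z.re + L⁻¹) * (j : ℝ)⁻¹ + ‖z‖ ^ 2 / 2 * ((j : ℝ) ^ 2)⁻¹) := by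
        rw [inv_inv]
        gcongr with j
        have := Complex.mul_add_norm_one_add_mul_le_exp z L⁻¹ (j : ℝ)⁻¹
        push_cast at this
        simpa [inv_pow] using this
    _ = L ^ k * Real.exp ((z.re + L⁻¹) * H + ‖z‖ ^ 2 / 2 * S) := by
        rw [← Real.exp_sum, sum_add_distrib, ← mul_sum, ← mul_sum]
    _ ≤ L ^ k * Real.exp (z.re * Real.log y + (2 + |z.re| + ‖z‖ ^ 2 / 2)) := by
        gcongr
    _ = Real.exp (2 + |z.re| + ‖z‖ ^ 2 / 2) * L ^ k * y ^ z.re := by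
        rw [Real.exp_add, mul_comm (z.re), ← Real.rpow_def_of_pos hy0]; ring

theorem exists_norm_coeff_taylor_prod_le {z : ℂ} {lam : ℝ} {μ ν : ℕ} (hre : z.re ≤ lam)
    (hμ : z.re = lam → μ ≤ ν) :
    ∃ c : ℝ, ∀ k < μ, ∀ m n : ℕ, 1 ≤ m → m ≤ n →
      ‖(taylor z (∏ j ∈ Ioc m n, (C (j : ℂ)⁻¹ * X + 1))).coeff k‖ ≤
        c * ((n : ℝ) / m) ^ lam * Real.log (max ((n : ℝ) / m) (Real.exp 1)) ^ (ν - 1) := by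
  obtain ⟨c, hc⟩ := exists_pow_log_max_exp_mul_rpow_le (k := μ - 1) hre
    fun h => Nat.sub_le_sub_right (hμ h) 1
  refine ⟨Real.exp (2 + |z.re| + ‖z‖ ^ 2 / 2) * c, fun k hk m n hm hmn => ?_⟩
  have hy : 1 ≤ (n : ℝ) / m := by
    rw [one_le_div (by exact_mod_cast hm)]; exact_mod_cast hmn
  rw [taylor_prod_C_mul_X_add_one, mul_assoc _ c, mul_assoc _ (c * _)]
  grw [norm_coeff_prod_le_mul_pow_log_mul_rpow z k hm hmn, mul_assoc _ (_ ^ k),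
    pow_le_pow_right₀ (one_le_log_max_exp _) (Nat.le_sub_one_of_lt hk), hc _ hy]

theorem stmt16_general (K : ℕ) (Hb : Matrix (Fin K) (Fin K) ℝ) (lam : ℝ) (ν : ℕ)
    (heig : ∀ z : ℂ, (Hb.map (Complex.ofReal)).charpoly.IsRoot z → z.re ≤ lam)
    (hjordan : ∀ z : ℂ, (Hb.map (Complex.ofReal)).charpoly.IsRoot z → z.re = lam →
      (minpoly ℂ (Hb.map (Complex.ofReal))).rootMultiplicity z ≤ ν)
    (B : ℕ → ℕ → Matrix (Fin K) (Fin K) ℝ)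
    (hBnn : ∀ n, B n n = 1)
    (hBrec : ∀ n i, i < n → B n i = (1 + ((i + 1 : ℕ) : ℝ)⁻¹ • Hb) * B n (i + 1)) :
    ∃ C : ℝ, ∀ m n : ℕ, 1 ≤ m → m ≤ n → ∀ i j : Fin K,
      |B n m i j| ≤ C * ((n : ℝ) / m) ^ lam *
        (Real.log (max ((n : ℝ) / m) (Real.exp 1))) ^ (ν - 1) := by
  set A := Hb.map Complex.ofReal
  set p := minpoly ℂ A
  have hroot (z : p.roots.toFinset) : A.charpoly.IsRoot z :=
    eval_eq_zero_of_dvd_of_eval_eq_zero (Matrix.minpoly_dvd_charpoly A)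
      ((mem_roots (minpoly.ne_zero (Algebra.IsIntegral.isIntegral A))).1
        (Multiset.mem_toFinset.1 z.2))
  choose c hc using fun z : p.roots.toFinset =>
    exists_norm_coeff_taylor_prod_le (heig z (hroot z)) (hjordan z (hroot z))
  obtain ⟨c₀, hc₀⟩ := Finite.exists_le c
  obtain ⟨M, hM⟩ := A.exists_norm_aeval_apply_le
  refine ⟨M * max c₀ 0, fun m n hm hmn i j => ?_⟩
  have hL := one_le_log_max_exp ((n : ℝ) / m)
  have hB : |B n m i j| = ‖aeval A (∏ l ∈ Ioc m n, (C (l : ℂ)⁻¹ * X + 1)) i j‖ := by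
    rw [← Matrix.map_ofReal_eq_aeval_prod hBnn hBrec hmn, Matrix.map_apply, Complex.norm_real,
      Real.norm_eq_abs]
  rw [hB, mul_assoc M, mul_assoc M]
  refine hM _ _ (by positivity) (fun z hz k hk => ?_) i j
  grw [hc ⟨z, Multiset.mem_toFinset.2 hz⟩ k hk m n hm hmn, hc₀, ← le_max_left c₀ 0, mul_assoc]

/-- Bound `‖B̄_{n,m}‖ ≤ C (n/m)^λ (log(n/m))^{ν−1}` (entrywise), where every
eigenvalue of `H̄` has real part at most `λ < 1` and `ν ≥ 1` bounds the Jordan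
block sizes (multiplicity in the minimal polynomial) of the eigenvalues with
real part `λ`; here `log x = ln (max x e)`. -/
theorem stmt16 (K : ℕ) (Hb : Matrix (Fin K) (Fin K) ℝ) (lam : ℝ) (ν : ℕ)
    (hlam : lam < 1) (hν : 1 ≤ ν)
    (heig : ∀ z : ℂ, (Hb.map (Complex.ofReal)).charpoly.IsRoot z → z.re ≤ lam)
    (hjordan : ∀ z : ℂ, (Hb.map (Complex.ofReal)).charpoly.IsRoot z → z.re = lam →
      (minpoly ℂ (Hb.map (Complex.ofReal))).rootMultiplicity z ≤ ν)
    (B : ℕ → ℕ → Matrix (Fin K) (Fin K) ℝ)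
    (hBnn : ∀ n, B n n = 1)
    (hBrec : ∀ n i, i < n → B n i = (1 + ((i + 1 : ℕ) : ℝ)⁻¹ • Hb) * B n (i + 1)) :
    ∃ C : ℝ, ∀ m n : ℕ, 1 ≤ m → m ≤ n → ∀ i j : Fin K,
      |B n m i j| ≤ C * ((n : ℝ) / m) ^ lam *
        (Real.log (max ((n : ℝ) / m) (Real.exp 1))) ^ (ν - 1) :=
  stmt16_general K Hb lam ν heig hjordan B hBnn hBrec
end
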